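/- arXiv:0908.0971 — 2 statements merged into one kernel-verified Lean document; each statement's English description precedes it below -/
import Mathlib

section
/- Let F be a field of characteristic 2 and for k = 3, 5 let e_n(uv + x^k) denote the F-dimension of F[[u,v,x]]/(uv + x^k, u^q, v^q, x^q) with q = 2^n. Then for every n ≥ 1, ( e_n(uv+x^5) − 4 e_{n−1}(uv+x^5) ) − ( e_n(uv+x^3) − 4 e_{n−1}(uv+x^3) ) equals 2 if n is even and 0 if n is odd. -/
open scoped Classical

/-- The Hilbert–Kunz-type dimension: the `F`-dimension of
`F[[x_i : i ∈ σ]] / (f, x_i^q : i ∈ σ)`. -/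
noncomputable def hkDim (F : Type) [Field F] (σ : Type) (f : MvPowerSeries σ F) (q : ℕ) : ℕ :=
  Module.finrank F
    (MvPowerSeries σ F ⧸
      Ideal.span ({f} ∪ Set.range fun i : σ => (MvPowerSeries.X i : MvPowerSeries σ F) ^ q))

/-!
Modulo `uv + x^k` one has `x^k ≡ -uv`, so every monomial is congruent to `±u^A v^B x^T` with
`T < k`, and modulo `(u^q, v^q, x^q)` the survivors are those with `A, B < q` and
`min A B * k + T < q`. These standard monomials form a basis of the quotient (over any commutative
ring); their linear independence is witnessed by alternating sums of coefficients that vanish on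
the ideal. Counting them gives `k * e = (2k - 1) q² - r (k - r)` with `r = q % k`, hence
`e(2q) - 4 e(q) = (4 r (k - r) - r' (k - r')) / k` with `r' = 2q % k`: this is `2` for `k = 3`, and
for `k = 5` it is `2` or `4` according as `q ≡ ±1` or `q ≡ ±2 (mod 5)`; finally `2^m ≡ ±1 (mod 5)`
exactly when `m` is even.
-/

open MvPowerSeries Finset

section SpanXPow

variable {σ R : Type*} [CommRing R]

theorem mem_span_X_pow_of_coeff_eq_zero [Fintype σ] {q : ℕ} {g : MvPowerSeries σ R}
    (hg : ∀ m : σ →₀ ℕ, (∀ i, m i < q) → coeff m g = 0) :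
    g ∈ Ideal.span (Set.range fun i => (X i : MvPowerSeries σ R) ^ q) := by
  suffices key : ∀ (s : Finset σ) (g : MvPowerSeries σ R),
      (∀ m : σ →₀ ℕ, (∀ i ∈ s, m i < q) → coeff m g = 0) →
        g ∈ Ideal.span (Set.range fun i => (X i : MvPowerSeries σ R) ^ q) from
    key univ g fun m hm => hg m fun i => hm i (mem_univ i)
  intro s
  induction s using Finset.induction_on with
  | empty =>
    intro g hg
    convert Ideal.zero_mem _
    ext m
    simpa using hg m
  | insert j s _ ih =>
    intro g hg
    let high : MvPowerSeries σ R := fun m => if q ≤ m j then coeff m g else 0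
    have hhigh : X j ^ q ∣ high := X_pow_dvd_iff.mpr fun m hm => if_neg (by omega)
    have hlow : g - high ∈ Ideal.span (Set.range fun i => (X i : MvPowerSeries σ R) ^ q) := by
      refine ih _ fun m hm => ?_
      change coeff m g - (if q ≤ m j then coeff m g else 0) = 0
      split_ifs with hj
      · exact sub_self _
      · rw [sub_zero]
        exact hg m fun i hi => (mem_insert.mp hi).elim (fun h => h ▸ (by omega)) (hm i)
    obtain ⟨c, hc⟩ := hhigh
    rw [← sub_add_cancel g high]
    exact add_mem hlow (hc ▸ Ideal.mul_mem_right _ _ (Ideal.subset_span ⟨j, rfl⟩))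

end SpanXPow

namespace UVPlusXPow

noncomputable def exponent (p : ℕ × ℕ × ℕ) : Fin 3 →₀ ℕ :=
  Finsupp.single 0 p.1 + Finsupp.single 1 p.2.1 + Finsupp.single 2 p.2.2

@[simp] lemma exponent_zero (p : ℕ × ℕ × ℕ) : exponent p 0 = p.1 := by simp [exponent]
@[simp] lemma exponent_one (p : ℕ × ℕ × ℕ) : exponent p 1 = p.2.1 := by simp [exponent]
@[simp] lemma exponent_two (p : ℕ × ℕ × ℕ) : exponent p 2 = p.2.2 := by simp [exponent]

lemma exponent_le_exponent {p p' : ℕ × ℕ × ℕ} : exponent p ≤ exponent p' ↔ p ≤ p' := by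
  simp [Finsupp.le_def, Fin.forall_fin_succ, Prod.le_def]

lemma exponent_injective : Function.Injective exponent := fun p p' h => by
  have h0 := congr($h 0); have h1 := congr($h 1); have h2 := congr($h 2)
  simp only [exponent_zero, exponent_one, exponent_two] at h0 h1 h2
  exact Prod.ext h0 (Prod.ext h1 h2)

lemma exponent_add (p p' : ℕ × ℕ × ℕ) : exponent (p + p') = exponent p + exponent p' := by
  ext i; fin_cases i <;> simp

lemma exponent_sub (p p' : ℕ × ℕ × ℕ) : exponent (p - p') = exponent p - exponent p' := by
  ext i; fin_cases i <;> simp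

lemma exponent_mk_apply (m : Fin 3 →₀ ℕ) : exponent (m 0, m 1, m 2) = m := by
  ext i; fin_cases i <;> simp

variable (R : Type*) [CommRing R]

noncomputable def monom (p : ℕ × ℕ × ℕ) : MvPowerSeries (Fin 3) R := monomial (exponent p) 1

variable {R}

lemma monom_add (p p' : ℕ × ℕ × ℕ) : monom R (p + p') = monom R p * monom R p' := by
  rw [monom, monom, monom, monomial_mul_monomial, one_mul, exponent_add]

lemma X_zero_pow (n : ℕ) : (X 0 : MvPowerSeries (Fin 3) R) ^ n = monom R (n, 0, 0) := by
  rw [X_pow_eq, monom, show exponent (n, 0, 0) = Finsupp.single 0 n by ext i; fin_cases i <;> simp]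
lemma X_one_pow (n : ℕ) : (X 1 : MvPowerSeries (Fin 3) R) ^ n = monom R (0, n, 0) := by
  rw [X_pow_eq, monom, show exponent (0, n, 0) = Finsupp.single 1 n by ext i; fin_cases i <;> simp]
lemma X_two_pow (n : ℕ) : (X 2 : MvPowerSeries (Fin 3) R) ^ n = monom R (0, 0, n) := by
  rw [X_pow_eq, monom, show exponent (0, 0, n) = Finsupp.single 2 n by ext i; fin_cases i <;> simp]

lemma X_zero_mul_X_one : (X 0 * X 1 : MvPowerSeries (Fin 3) R) = monom R (1, 1, 0) := by
  rw [← pow_one (X 0), ← pow_one (X 1), X_zero_pow, X_one_pow, ← monom_add]; rfl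

variable (R) in
noncomputable def hkIdeal (k q : ℕ) : Ideal (MvPowerSeries (Fin 3) R) :=
  Ideal.span ({X 0 * X 1 + X 2 ^ k} ∪ Set.range fun i => X i ^ q)

variable {k q : ℕ}

lemma X_zero_mul_X_one_add_X_two_pow_mem_hkIdeal :
    (X 0 * X 1 + X 2 ^ k : MvPowerSeries (Fin 3) R) ∈ hkIdeal R k q :=
  Ideal.subset_span (Set.mem_union_left _ rfl)

lemma X_pow_mem_hkIdeal (i : Fin 3) : (X i : MvPowerSeries (Fin 3) R) ^ q ∈ hkIdeal R k q :=
  Ideal.subset_span (Set.mem_union_right _ ⟨i, rfl⟩)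

lemma span_X_pow_le_hkIdeal :
    Ideal.span (Set.range fun i => (X i : MvPowerSeries (Fin 3) R) ^ q) ≤ hkIdeal R k q :=
  Ideal.span_le.mpr fun _ ⟨i, hi⟩ => hi ▸ X_pow_mem_hkIdeal i

lemma monom_mem_hkIdeal_of_le {p : ℕ × ℕ × ℕ} (h : q ≤ p.1 ∨ q ≤ p.2.1 ∨ q ≤ p.2.2) :
    monom R p ∈ hkIdeal R k q := by
  obtain ⟨i, e, he, hpow⟩ : ∃ (i : Fin 3) (e : ℕ × ℕ × ℕ), e ≤ p ∧ X i ^ q = monom R e := by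
    rcases h with h | h | h
    · exact ⟨0, _, by simpa [Prod.le_def] using h, X_zero_pow q⟩
    · exact ⟨1, _, by simpa [Prod.le_def] using h, X_one_pow q⟩
    · exact ⟨2, _, by simpa [Prod.le_def] using h, X_two_pow q⟩
  rw [← tsub_add_cancel_of_le he, monom_add, ← hpow]
  exact Ideal.mul_mem_left _ _ (X_pow_mem_hkIdeal i)

lemma mk_monom_add_right (a b c : ℕ) :
    Ideal.Quotient.mk (hkIdeal R k q) (monom R (a, b, c + k)) =
      -Ideal.Quotient.mk (hkIdeal R k q) (monom R (a + 1, b + 1, c)) := by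
  have h : monom R (a, b, c) * (X 0 * X 1 + X 2 ^ k) =
      monom R (a + 1, b + 1, c) + monom R (a, b, c + k) := by
    rw [X_zero_mul_X_one, X_two_pow, mul_add, ← monom_add, ← monom_add]; rfl
  rw [eq_neg_iff_add_eq_zero, ← map_add, add_comm, ← h, Ideal.Quotient.eq_zero_iff_mem]
  exact Ideal.mul_mem_left _ _ X_zero_mul_X_one_add_X_two_pow_mem_hkIdeal

lemma mk_monom_mul_add (a b j c : ℕ) :
    Ideal.Quotient.mk (hkIdeal R k q) (monom R (a, b, j * k + c)) =
      (-1 : R) ^ j • Ideal.Quotient.mk (hkIdeal R k q) (monom R (a + j, b + j, c)) := by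
  induction j generalizing a b with
  | zero => simp
  | succ j ih =>
    rw [show (j + 1) * k + c = j * k + c + k by ring, mk_monom_add_right, ih, pow_succ,
      mul_smul, neg_one_smul, smul_neg, add_right_comm a, add_right_comm b, add_assoc a,
      add_assoc b]

def stdExps (k q : ℕ) : Finset (ℕ × ℕ × ℕ) :=
  (range q ×ˢ range q ×ˢ range k).filter fun p => min p.1 p.2.1 * k + p.2.2 < q

lemma mem_stdExps {p : ℕ × ℕ × ℕ} :
    p ∈ stdExps k q ↔ p.1 < q ∧ p.2.1 < q ∧ p.2.2 < k ∧ min p.1 p.2.1 * k + p.2.2 < q := by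
  simp [stdExps, and_assoc]

def reduce (k : ℕ) (p : ℕ × ℕ × ℕ) : ℕ × ℕ × ℕ :=
  (p.1 + p.2.2 / k, p.2.1 + p.2.2 / k, p.2.2 % k)

lemma mk_monom_eq_reduce (p : ℕ × ℕ × ℕ) :
    Ideal.Quotient.mk (hkIdeal R k q) (monom R p) =
      (-1 : R) ^ (p.2.2 / k) • Ideal.Quotient.mk (hkIdeal R k q) (monom R (reduce k p)) := by
  obtain ⟨a, b, c⟩ := p
  conv_lhs => rw [← Nat.div_add_mod' c k]
  exact mk_monom_mul_add _ _ _ _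

lemma monom_mem_hkIdeal_of_not_mem_stdExps {p : ℕ × ℕ × ℕ} (hk : p.2.2 < k)
    (hp : p ∉ stdExps k q) : monom R p ∈ hkIdeal R k q := by
  obtain ⟨a, b, t⟩ := p
  simp only [mem_stdExps, not_and_or, not_lt] at hp hk
  rcases hp with h | h | h | h
  · exact monom_mem_hkIdeal_of_le (Or.inl h)
  · exact monom_mem_hkIdeal_of_le (Or.inr (Or.inl h))
  · omega
  -- `u^a v^b x^t ≡ ±u^(a-m) v^(b-m) x^(m*k+t)`, whose power of `x` is at least `q`
  set m := min a b
  have hmem := monom_mem_hkIdeal_of_le (R := R) (k := k) (p := (a - m, b - m, m * k + t))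
    (Or.inr (Or.inr h))
  rw [← Ideal.Quotient.eq_zero_iff_mem, mk_monom_mul_add, Nat.sub_add_cancel (min_le_left a b),
    Nat.sub_add_cancel (min_le_right a b)] at hmem
  rw [← Ideal.Quotient.eq_zero_iff_mem]
  exact ((isUnit_neg_one (α := R)).pow m).smul_eq_zero.mp hmem

lemma coeff_mul_monom (r : MvPowerSeries (Fin 3) R) (p e : ℕ × ℕ × ℕ) :
    coeff (exponent p) (r * monom R e) = if e ≤ p then coeff (exponent (p - e)) r else 0 := by
  rw [monom, coeff_mul_monomial, mul_one, exponent_sub]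
  exact if_congr exponent_le_exponent rfl rfl

lemma coeff_monom (p e : ℕ × ℕ × ℕ) :
    coeff (exponent p) (monom R e) = if p = e then 1 else 0 := by
  rw [monom, coeff_monomial]
  exact if_congr exponent_injective.eq_iff rfl rfl

variable (R k) in
/-- Modulo `hkIdeal`, `u^(A-s) v^(B-s) x^(s*k+T) ≡ (-1)^s u^A v^B x^T`; this alternating sum of
coefficients is the coordinate along the standard monomial `u^A v^B x^T`. -/
noncomputable def stdCoord (p : ℕ × ℕ × ℕ) : MvPowerSeries (Fin 3) R →ₗ[R] R :=
  ∑ s ∈ range (min p.1 p.2.1 + 1),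
    (-1 : R) ^ s • coeff (exponent (p.1 - s, p.2.1 - s, s * k + p.2.2))

lemma stdCoord_apply (p : ℕ × ℕ × ℕ) (f : MvPowerSeries (Fin 3) R) :
    stdCoord R k p f = ∑ s ∈ range (min p.1 p.2.1 + 1),
      (-1 : R) ^ s * coeff (exponent (p.1 - s, p.2.1 - s, s * k + p.2.2)) f := by
  simp [stdCoord]

lemma stdCoord_monom {p : ℕ × ℕ × ℕ} (hp : p.2.2 < k) (e : ℕ × ℕ × ℕ) :
    stdCoord R k p (monom R e) = if reduce k e = p then (-1 : R) ^ (e.2.2 / k) else 0 := by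
  obtain ⟨A, B, T⟩ := p
  obtain ⟨a, b, c⟩ := e
  have hk : 0 < k := by simp only at hp; omega
  have key : ∀ s ∈ range (min A B + 1),
      (A - s, B - s, s * k + T) = (a, b, c) ↔ reduce k (a, b, c) = (A, B, T) ∧ s = c / k := by
    intro s hs
    have hdiv := Nat.div_mod_unique (a := c) (d := s) (c := T) hk
    simp only [mem_range] at hs
    simp only [reduce, Prod.mk.injEq] at hdiv ⊢
    constructor
    · rintro ⟨h1, h2, h3⟩
      obtain ⟨hs', hT⟩ := hdiv.mpr ⟨by rw [← h3]; ring, hp⟩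
      omega
    · rintro ⟨⟨h1, h2, h3⟩, rfl⟩
      refine ⟨by omega, by omega, ?_⟩
      rw [← h3, mul_comm]
      exact Nat.div_add_mod c k
  rw [stdCoord_apply, Finset.sum_congr rfl fun s hs => by
    rw [coeff_monom, if_congr (key s hs) rfl rfl, mul_ite, mul_one, mul_zero, ite_and]]
  split_ifs with hred
  · rw [Finset.sum_ite_eq', if_pos]
    simp only [reduce, Prod.mk.injEq, mem_range] at hred ⊢
    omega
  · exact Finset.sum_const_zero

lemma stdCoord_mul_X_pow {p : ℕ × ℕ × ℕ} (hp : p ∈ stdExps k q) (r : MvPowerSeries (Fin 3) R)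
    (i : Fin 3) : stdCoord R k p (r * X i ^ q) = 0 := by
  obtain ⟨A, B, T⟩ := p
  obtain ⟨hA, hB, -, hmin⟩ := mem_stdExps.mp hp
  rw [stdCoord_apply]
  refine Finset.sum_eq_zero fun s hs => ?_
  have hsk : s * k ≤ min A B * k := Nat.mul_le_mul_right k (Nat.lt_succ_iff.mp (mem_range.mp hs))
  rw [X_pow_eq, coeff_mul_monomial, if_neg, mul_zero]
  rw [Finsupp.single_le_iff]
  dsimp only at hA hB hmin
  fin_cases i <;>
    simp only [Fin.zero_eta, Fin.mk_one, Fin.reduceFinMk, Fin.isValue, exponent_zero, exponent_one,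
      exponent_two, not_le] <;> omega

lemma stdCoord_mul_X_zero_mul_X_one_add_X_two_pow {p : ℕ × ℕ × ℕ} (hp : p.2.2 < k)
    (r : MvPowerSeries (Fin 3) R) :
    stdCoord R k p (r * (X 0 * X 1 + X 2 ^ k)) = 0 := by
  obtain ⟨A, B, T⟩ := p
  simp only at hp
  set m := min A B
  set g : ℕ → R := fun s => (-1) ^ s * coeff (exponent (A - s - 1, B - s - 1, s * k + T)) r
  have h1 : stdCoord R k (A, B, T) (r * monom R (1, 1, 0)) = ∑ s ∈ range m, g s := by
    rw [stdCoord_apply, sum_range_succ, coeff_mul_monom,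
      if_neg (by simp only [Prod.mk_le_mk]; omega), mul_zero, add_zero]
    refine sum_congr rfl fun s hs => ?_
    rw [coeff_mul_monom, if_pos (by simp only [mem_range] at hs; simp only [Prod.mk_le_mk]; omega)]
    rfl
  -- the `x^k`-part is the same alternating sum shifted by one, hence with the opposite sign
  have h2 : stdCoord R k (A, B, T) (r * monom R (0, 0, k)) = -∑ s ∈ range m, g s := by
    rw [stdCoord_apply, sum_range_succ', coeff_mul_monom,
      if_neg (by simp only [Prod.mk_le_mk]; omega), mul_zero, add_zero, ← sum_neg_distrib]
    refine sum_congr rfl fun s _ => ?_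
    rw [coeff_mul_monom, if_pos (by simp only [Prod.mk_le_mk, zero_le, true_and]; nlinarith)]
    simp only [g, pow_succ, Prod.mk_sub_mk, Nat.sub_zero, show (s + 1) * k + T - k = s * k + T by
      rw [add_one_mul, add_right_comm, Nat.add_sub_cancel], Nat.sub_sub]
    ring
  rw [mul_add, map_add, X_zero_mul_X_one, X_two_pow, h1, h2, add_neg_cancel]

lemma stdCoord_eq_zero_of_mem {p : ℕ × ℕ × ℕ} (hp : p ∈ stdExps k q)
    {f : MvPowerSeries (Fin 3) R} (hf : f ∈ hkIdeal R k q) : stdCoord R k p f = 0 := by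
  suffices h : ∀ r, stdCoord R k p (r * f) = 0 by simpa using h 1
  induction hf using Submodule.span_induction with
  | mem g hg =>
    rcases hg with rfl | ⟨i, rfl⟩
    · exact stdCoord_mul_X_zero_mul_X_one_add_X_two_pow (mem_stdExps.mp hp).2.2.1
    · exact fun r => stdCoord_mul_X_pow hp r i
  | zero => simp
  | add x y _ _ hx hy => intro r; rw [mul_add, map_add, hx, hy, add_zero]
  | smul a x _ hx => intro r; rw [smul_eq_mul, ← mul_assoc]; exact hx _

lemma reduce_of_lt {p : ℕ × ℕ × ℕ} (hp : p.2.2 < k) : reduce k p = p := by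
  simp [reduce, Nat.div_eq_of_lt hp, Nat.mod_eq_of_lt hp]

lemma stdCoord_monom_of_lt {p e : ℕ × ℕ × ℕ} (hp : p.2.2 < k) (he : e.2.2 < k) :
    stdCoord R k p (monom R e) = if e = p then 1 else 0 := by
  rw [stdCoord_monom hp, reduce_of_lt he, Nat.div_eq_of_lt he, pow_zero]

variable (R) in
lemma exists_sub_mem_span_X_pow (f : MvPowerSeries (Fin 3) R) :
    ∃ g ∈ Submodule.span R (Set.range (monom R)),
      f - g ∈ Ideal.span (Set.range fun i => (X i : MvPowerSeries (Fin 3) R) ^ q) := by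
  let box := range q ×ˢ range q ×ˢ range q
  refine ⟨∑ p ∈ box, coeff (exponent p) f • monom R p,
    Submodule.sum_mem _ fun p _ => Submodule.smul_mem _ _ (Submodule.subset_span ⟨p, rfl⟩),
    mem_span_X_pow_of_coeff_eq_zero fun m hm => ?_⟩
  rw [← exponent_mk_apply m, map_sub, map_sum]
  simp_rw [map_smul, coeff_monom, smul_eq_mul, mul_ite, mul_one, mul_zero]
  rw [sum_ite_eq, if_pos (by simpa [box] using ⟨hm 0, hm 1, hm 2⟩), sub_self]

lemma mk_monom_eq_sum_stdCoord (hk : 0 < k) (e : ℕ × ℕ × ℕ) :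
    Ideal.Quotient.mk (hkIdeal R k q) (monom R e) =
      ∑ p ∈ stdExps k q, stdCoord R k p (monom R e) • Ideal.Quotient.mk _ (monom R p) := by
  rw [sum_congr rfl fun p hp => by
    rw [stdCoord_monom (mem_stdExps.mp hp).2.2.1, ite_smul, zero_smul], sum_ite_eq,
    mk_monom_eq_reduce]
  split_ifs with he
  · rfl
  · rw [Ideal.Quotient.eq_zero_iff_mem.mpr
      (monom_mem_hkIdeal_of_not_mem_stdExps (Nat.mod_lt _ hk) he), smul_zero]

lemma mk_eq_sum_stdCoord_of_mem_span (hk : 0 < k) {f : MvPowerSeries (Fin 3) R}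
    (hf : f ∈ Submodule.span R (Set.range (monom R))) :
    Ideal.Quotient.mk (hkIdeal R k q) f =
      ∑ p ∈ stdExps k q, stdCoord R k p f • Ideal.Quotient.mk _ (monom R p) := by
  induction hf using Submodule.span_induction with
  | mem g hg => obtain ⟨e, rfl⟩ := hg; exact mk_monom_eq_sum_stdCoord hk e
  | zero => simp
  | add x y _ _ hx hy => simp only [map_add, hx, hy, add_smul, sum_add_distrib]
  | smul a x _ hx =>
    rw [← Ideal.Quotient.mkₐ_eq_mk R, map_smul, Ideal.Quotient.mkₐ_eq_mk, hx, smul_sum]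
    simp only [map_smul, smul_eq_mul, mul_smul]

lemma mk_eq_sum_stdCoord (hk : 0 < k) (f : MvPowerSeries (Fin 3) R) :
    Ideal.Quotient.mk (hkIdeal R k q) f =
      ∑ p ∈ stdExps k q, stdCoord R k p f • Ideal.Quotient.mk _ (monom R p) := by
  obtain ⟨g, hg, hfg⟩ := exists_sub_mem_span_X_pow R (q := q) f
  replace hfg := span_X_pow_le_hkIdeal (k := k) hfg
  have hcoord : ∀ p ∈ stdExps k q, stdCoord R k p f = stdCoord R k p g := fun p hp =>
    sub_eq_zero.mp (map_sub (stdCoord R k p) f g ▸ stdCoord_eq_zero_of_mem hp hfg)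
  rw [Ideal.Quotient.eq.mpr hfg, sum_congr rfl fun p hp => by rw [hcoord p hp]]
  exact mk_eq_sum_stdCoord_of_mem_span hk hg

lemma linearIndependent_mk_monom :
    LinearIndependent R fun p : stdExps k q => Ideal.Quotient.mk (hkIdeal R k q) (monom R p) := by
  rw [Fintype.linearIndependent_iff]
  intro c hc p₀
  have hmem : ∑ p, c p • monom R p ∈ hkIdeal R k q := by
    rw [← Ideal.Quotient.eq_zero_iff_mem, ← Ideal.Quotient.mkₐ_eq_mk R, map_sum]
    simpa only [map_smul, Ideal.Quotient.mkₐ_eq_mk] using hc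
  have hlt : ∀ p : stdExps k q, (p : ℕ × ℕ × ℕ).2.2 < k := fun p => (mem_stdExps.mp p.2).2.2.1
  have h := stdCoord_eq_zero_of_mem p₀.2 hmem
  rwa [map_sum, sum_eq_single p₀ (fun p _ hp => by
    rw [map_smul, stdCoord_monom_of_lt (hlt p₀) (hlt p), if_neg (Subtype.coe_ne_coe.mpr hp),
      smul_zero]) (by simp), map_smul, stdCoord_monom_of_lt (hlt p₀) (hlt p₀), if_pos rfl,
    smul_eq_mul, mul_one] at h

lemma span_mk_monom (hk : 0 < k) :
    ⊤ ≤ Submodule.span R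
      (Set.range fun p : stdExps k q => Ideal.Quotient.mk (hkIdeal R k q) (monom R p)) := by
  rintro x -
  obtain ⟨f, rfl⟩ := Ideal.Quotient.mk_surjective x
  rw [mk_eq_sum_stdCoord hk, ← sum_coe_sort]
  exact Submodule.sum_mem _ fun p _ => Submodule.smul_mem _ _ (Submodule.subset_span ⟨p, rfl⟩)

variable (R k q) in
noncomputable def stdBasis (hk : 0 < k) :
    Module.Basis (stdExps k q) R (MvPowerSeries (Fin 3) R ⧸ hkIdeal R k q) :=
  Module.Basis.mk linearIndependent_mk_monom (span_mk_monom hk)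

lemma card_filter_min_lt {T : ℕ} (hT : T ≤ q) :
    #((range q ×ˢ range q).filter fun p => min p.1 p.2 < T) = T * (2 * q - T) := by
  have hcompl : (range q ×ˢ range q).filter (fun p => ¬ min p.1 p.2 < T) = Ico T q ×ˢ Ico T q := by
    ext ⟨a, b⟩
    simp only [mem_filter, mem_product, mem_range, mem_Ico, not_lt, le_min_iff]
    omega
  have h := card_filter_add_card_filter_not (s := range q ×ˢ range q)
    (fun p : ℕ × ℕ => min p.1 p.2 < T)
  rw [hcompl, card_product, card_product, Nat.card_Ico, card_range] at h
  obtain ⟨d, rfl⟩ := Nat.exists_eq_add_of_le hT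
  rw [show 2 * (T + d) - T = T + 2 * d by omega]
  rw [show T + d - T = d by omega] at h
  nlinarith

lemma card_stdExps_eq_sum :
    #(stdExps k q) = ∑ t ∈ range k,
      #((range q ×ˢ range q).filter fun p => min p.1 p.2 * k + t < q) := by
  simp only [stdExps, card_filter, sum_product]
  conv_rhs => rw [sum_comm]
  exact sum_congr rfl fun _ _ => sum_comm

lemma mul_add_lt_mul_add_iff {j t M r : ℕ} (ht : t < k) (hr : r < k) :
    j * k + t < M * k + r ↔ j < M ∨ j = M ∧ t < r := by
  rcases lt_trichotomy j M with h | rfl | h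
  · have : (j + 1) * k ≤ M * k := Nat.mul_le_mul_right k h
    exact iff_of_true (by nlinarith) (Or.inl h)
  · omega
  · have : (M + 1) * k ≤ j * k := Nat.mul_le_mul_right k h
    exact iff_of_false (by nlinarith) (by omega)

lemma card_stdExps_mul_add {M r : ℕ} (hr : r < k) :
    #(stdExps k (M * k + r)) = r * ((M + 1) * (2 * (M * k + r) - (M + 1))) +
      (k - r) * (M * (2 * (M * k + r) - M)) := by
  have hcount : ∀ t < k,
      #((range (M * k + r) ×ˢ range (M * k + r)).filter fun p => min p.1 p.2 * k + t < M * k + r) =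
        if t < r then (M + 1) * (2 * (M * k + r) - (M + 1)) else M * (2 * (M * k + r) - M) := by
    intro t ht
    have hT : (if t < r then M + 1 else M) ≤ M * k + r := by split_ifs <;> nlinarith
    rw [← apply_ite (fun T => T * (2 * (M * k + r) - T)), ← card_filter_min_lt hT]
    congr 1
    refine filter_congr fun p _ => ?_
    rw [mul_add_lt_mul_add_iff ht hr]
    split_ifs <;> omega
  rw [card_stdExps_eq_sum, sum_congr rfl fun t ht => hcount t (mem_range.mp ht),
    ← sum_range_add_sum_Ico _ hr.le, sum_congr rfl fun t ht => if_pos (mem_range.mp ht),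
    sum_congr rfl fun t ht => if_neg (not_lt.mpr (mem_Ico.mp ht).1), sum_const, sum_const,
    card_range, Nat.card_Ico, smul_eq_mul, smul_eq_mul]

lemma card_stdExps (hk : 0 < k) :
    (k : ℤ) * #(stdExps k q) = (2 * k - 1) * q ^ 2 - (q % k : ℕ) * (k - (q % k : ℕ)) := by
  obtain ⟨M, r, hr, rfl⟩ : ∃ M r, r < k ∧ q = M * k + r :=
    ⟨q / k, q % k, Nat.mod_lt q hk, (Nat.div_add_mod' q k).symm⟩
  rw [card_stdExps_mul_add hr, Nat.mul_add_mod_self_right, Nat.mod_eq_of_lt hr]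
  rcases Nat.eq_zero_or_pos r with rfl | hr0
  · push_cast [Nat.sub_zero, Nat.cast_sub (show M ≤ 2 * (M * k + 0) by nlinarith)]
    ring
  · push_cast [Nat.cast_sub (show M ≤ 2 * (M * k + r) by nlinarith),
      Nat.cast_sub (show M + 1 ≤ 2 * (M * k + r) by nlinarith), Nat.cast_sub hr.le]
    ring

lemma card_stdExps_two_mul_sub (hk : 0 < k) :
    (k : ℤ) * (#(stdExps k (2 * q)) - 4 * #(stdExps k q)) =
      4 * ((q % k : ℕ) * (k - (q % k : ℕ))) - ((2 * q) % k : ℕ) * (k - ((2 * q) % k : ℕ)) := by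
  have h := card_stdExps (q := q) hk
  have h2 := card_stdExps (q := 2 * q) hk
  rw [Nat.cast_mul, Nat.cast_ofNat] at h2
  linear_combination h2 - 4 * h

lemma card_stdExps_three_two_mul_sub (hq : ¬ 3 ∣ q) :
    (#(stdExps 3 (2 * q)) : ℤ) - 4 * #(stdExps 3 q) = 2 := by
  have hr : q % 3 = 1 ∧ 2 * q % 3 = 2 ∨ q % 3 = 2 ∧ 2 * q % 3 = 1 := by omega
  have h := card_stdExps_two_mul_sub (k := 3) (q := q) (by norm_num)
  rcases hr with ⟨h1, h2⟩ | ⟨h1, h2⟩ <;> simp only [h1, h2] at h <;> push_cast at h <;> linarith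

lemma card_stdExps_five_two_mul_sub (hq : ¬ 5 ∣ q) :
    (#(stdExps 5 (2 * q)) : ℤ) - 4 * #(stdExps 5 q) =
      if q % 5 = 1 ∨ q % 5 = 4 then 2 else 4 := by
  have hr : q % 5 = 1 ∧ 2 * q % 5 = 2 ∨ q % 5 = 2 ∧ 2 * q % 5 = 4 ∨
      q % 5 = 3 ∧ 2 * q % 5 = 1 ∨ q % 5 = 4 ∧ 2 * q % 5 = 3 := by
    rw [Nat.dvd_iff_mod_eq_zero] at hq
    rw [Nat.mul_mod]
    have := Nat.mod_lt q (show 5 > 0 by norm_num)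
    interval_cases q % 5 <;> simp_all
  have h := card_stdExps_two_mul_sub (k := 5) (q := q) (by norm_num)
  rcases hr with ⟨h1, h2⟩ | ⟨h1, h2⟩ | ⟨h1, h2⟩ | ⟨h1, h2⟩ <;> simp only [h1, h2] at h ⊢ <;>
    push_cast at h <;> norm_num <;> linarith

lemma two_pow_mod_five (m : ℕ) :
    m % 2 = 0 ∧ (2 ^ m % 5 = 1 ∨ 2 ^ m % 5 = 4) ∨ m % 2 = 1 ∧ (2 ^ m % 5 = 2 ∨ 2 ^ m % 5 = 3) := by
  induction m with
  | zero => simp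
  | succ m ih => rw [pow_succ, Nat.mul_mod]; omega

lemma hkDim_eq_card {F : Type} [Field F] {k : ℕ} (hk : 0 < k) (q : ℕ) :
    hkDim F (Fin 3) (X 0 * X 1 + X 2 ^ k) q = #(stdExps k q) := by
  rw [hkDim, ← hkIdeal, Module.finrank_eq_card_basis (stdBasis F k q hk), Fintype.card_coe]

end UVPlusXPow

open UVPlusXPow in
theorem stmt5_general (F : Type) [Field F] (n : ℕ) (hn : 1 ≤ n) :
    ((hkDim F (Fin 3)
          (MvPowerSeries.X 0 * MvPowerSeries.X 1 + MvPowerSeries.X 2 ^ 5) (2 ^ n) : ℤ)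
        - 4 * hkDim F (Fin 3)
          (MvPowerSeries.X 0 * MvPowerSeries.X 1 + MvPowerSeries.X 2 ^ 5) (2 ^ (n - 1)))
      - ((hkDim F (Fin 3)
          (MvPowerSeries.X 0 * MvPowerSeries.X 1 + MvPowerSeries.X 2 ^ 3) (2 ^ n) : ℤ)
        - 4 * hkDim F (Fin 3)
          (MvPowerSeries.X 0 * MvPowerSeries.X 1 + MvPowerSeries.X 2 ^ 3) (2 ^ (n - 1)))
      = if Even n then 2 else 0 := by
  obtain ⟨m, rfl⟩ := Nat.exists_eq_add_of_le' hn
  have h3 : ¬ 3 ∣ 2 ^ m := fun h => by simpa using Nat.prime_three.dvd_of_dvd_pow h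
  have h5 : ¬ 5 ∣ 2 ^ m := fun h => by simpa using Nat.prime_five.dvd_of_dvd_pow h
  rw [Nat.add_sub_cancel, hkDim_eq_card (by norm_num), hkDim_eq_card (by norm_num),
    hkDim_eq_card (by norm_num), hkDim_eq_card (by norm_num), pow_succ' 2 m,
    card_stdExps_five_two_mul_sub h5, card_stdExps_three_two_mul_sub h3]
  rcases two_pow_mod_five m with ⟨hm, hr⟩ | ⟨hm, hr⟩
  · rw [if_pos hr, if_neg (by rw [Nat.even_add_one, Nat.even_iff]; omega)]; norm_num
  · rw [if_neg (by omega), if_pos (by rw [Nat.even_add_one, Nat.even_iff]; omega)]; norm_num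

/-- Lemma 1.9(a) of the paper, coefficientwise: for `char F = 2` and
`e_n(uv + x^k) = dim_F F[[u,v,x]]/(uv + x^k, u^q, v^q, x^q)` with `q = 2^n`, one has,
for every `n ≥ 1`,
`(e_n(uv+x⁵) - 4e_(n-1)(uv+x⁵)) - (e_n(uv+x³) - 4e_(n-1)(uv+x³)) = 2` if `n` is even,
and `= 0` if `n` is odd. -/
theorem stmt5 (F : Type) [Field F] [CharP F 2] (n : ℕ) (hn : 1 ≤ n) :
    ((hkDim F (Fin 3)
          (MvPowerSeries.X 0 * MvPowerSeries.X 1 + MvPowerSeries.X 2 ^ 5) (2 ^ n) : ℤ)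
        - 4 * hkDim F (Fin 3)
          (MvPowerSeries.X 0 * MvPowerSeries.X 1 + MvPowerSeries.X 2 ^ 5) (2 ^ (n - 1)))
      - ((hkDim F (Fin 3)
          (MvPowerSeries.X 0 * MvPowerSeries.X 1 + MvPowerSeries.X 2 ^ 3) (2 ^ n) : ℤ)
        - 4 * hkDim F (Fin 3)
          (MvPowerSeries.X 0 * MvPowerSeries.X 1 + MvPowerSeries.X 2 ^ 3) (2 ^ (n - 1)))
      = if Even n then 2 else 0 :=
  stmt5_general F n hn
end

section
/- Let F be a field of characteristic 2 and for k = 3, 5 let e_n(uv + x^k) denote the F-dimension of F[[u,v,x]]/(uv + x^k, u^q, v^q, x^q) with q = 2^n. Then for every n ≥ 1, 2( e_n(uv+x^3) − 4 e_{n−1}(uv+x^3) ) − ( e_n(uv+x^5) − 4 e_{n−1}(uv+x^5) ) equals 2 if n is odd and 0 if n is even; moreover for n = 0 the corresponding constant terms satisfy 2·e_0(uv+x^3) − e_0(uv+x^5) = 1. -/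
open scoped Classical

/-!
Modulo `(u^q, v^q, x^q)` the ring becomes the finite-dimensional algebra with monomial basis
`u^a v^b x^c`, `a, b, c < q`, so `e_n(f)` is the dimension of the cokernel, hence of the kernel,
of multiplication by `f` on it. For `f = uv + x^k` the kernel condition links the coefficients at
`p` and `p + (1, 1, -k)` with a sign and forces coefficients to vanish where such a diagonal chain
hits the walls `a = 0`, `b = 0` or `c < k`. A kernel element is therefore determined freely by its
values at the upper ends of those chains which leave the box through `c ≥ q`, and counting them
gives `k · e_n = (2k - 1) q² - r (k - r)` with `r = q mod k`. For `q = 2^n`, `r (3 - r) = 2`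
always, while `r (5 - r)` is `4` or `6` according to the parity of `n`.
-/

open MvPowerSeries Finset

namespace MvPowerSeries

variable {σ R : Type*} [CommSemiring R]

theorem mem_span_X_pow_iff [Fintype σ] {q : ℕ} {s : MvPowerSeries σ R} :
    s ∈ Ideal.span (Set.range fun i => (X i : MvPowerSeries σ R) ^ q) ↔
      ∀ d : σ →₀ ℕ, (∀ i, d i < q) → coeff d s = 0 := by
  set J := Ideal.span (Set.range fun i => (X i : MvPowerSeries σ R) ^ q)
  constructor
  · intro hs d hd
    obtain ⟨c, rfl⟩ := Ideal.mem_span_range_iff_exists_fun.mp hs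
    rw [map_sum]
    exact sum_eq_zero fun i _ => X_pow_dvd_iff.mp (dvd_mul_left _ _) d (hd i)
  · -- split off, one variable `X i` at a time, the part of degree `≥ q` in `X i`
    suffices ∀ S : Finset σ, ∀ s : MvPowerSeries σ R,
        (∀ d : σ →₀ ℕ, (∀ i ∈ S, d i < q) → coeff d s = 0) → s ∈ J from
      fun hs => this univ s fun d hd => hs d fun i => hd i (mem_univ i)
    intro S
    classical
    induction S using Finset.induction_on with
    | empty => exact fun s hs => (ext fun d => hs d (by simp)) ▸ J.zero_mem
    | insert i S _ ih =>
      intro s hs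
      let low : MvPowerSeries σ R := fun d => if d i < q then coeff d s else 0
      let high : MvPowerSeries σ R := fun d => if d i < q then 0 else coeff d s
      have hlow : low ∈ J := ih low fun d hd => by
        change (if d i < q then coeff d s else 0) = 0
        split_ifs with h
        · exact hs d (by simpa [h] using hd)
        · rfl
      have hhigh : high ∈ J := by
        obtain ⟨t, ht⟩ := (X_pow_dvd_iff (φ := high)).mpr fun d (hd : d i < q) => if_pos hd
        rw [ht]
        exact J.mul_mem_right t (Ideal.subset_span ⟨i, rfl⟩)
      have hs : s = high + low := ext fun d => by
        change coeff d s = (if d i < q then 0 else coeff d s) + (if d i < q then coeff d s else 0)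
        split_ifs <;> simp
      exact hs ▸ J.add_mem hhigh hlow

end MvPowerSeries

namespace HilbertKunz

section Truncation

variable (σ : Type*) [Fintype σ] {R : Type*} [CommRing R] (q : ℕ)

noncomputable def box : Finset (σ →₀ ℕ) :=
  (Fintype.piFinset fun _ : σ => range q).map Finsupp.equivFunOnFinite.symm.toEmbedding

variable {σ q}

@[simp] lemma mem_box {d : σ →₀ ℕ} : d ∈ box σ q ↔ ∀ i, d i < q := by
  simp [box, mem_map_equiv]

variable (q)

noncomputable def boxCoeff : MvPowerSeries σ R →ₗ[R] (box σ q → R) :=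
  LinearMap.pi fun d => coeff d.1

noncomputable def boxLift : (box σ q → R) →ₗ[R] MvPowerSeries σ R :=
  Function.ExtendByZero.linearMap R Subtype.val

/-- Multiplication by `f` on `R[[X]] / (X i ^ q)`, in the monomial basis. -/
noncomputable def truncMul (f : MvPowerSeries σ R) : (box σ q → R) →ₗ[R] (box σ q → R) :=
  boxCoeff q ∘ₗ LinearMap.mulLeft R f ∘ₗ boxLift q

variable {q}

lemma boxCoeff_apply (s : MvPowerSeries σ R) (d : box σ q) : boxCoeff q s d = coeff d.1 s := rfl

lemma coeff_boxLift (v : box σ q → R) (d : σ →₀ ℕ) :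
    coeff d (boxLift q v) = if h : d ∈ box σ q then v ⟨d, h⟩ else 0 := by
  split_ifs with h
  · exact Subtype.val_injective.extend_apply v 0 ⟨d, h⟩
  · exact Function.extend_apply' _ _ _ fun ⟨e, he⟩ => h (he ▸ e.2)

@[simp] lemma boxCoeff_boxLift (v : box σ q → R) : boxCoeff q (boxLift q v) = v := by
  ext d
  simp [boxCoeff_apply, coeff_boxLift, d.2]

lemma boxCoeff_eq_zero_iff {s : MvPowerSeries σ R} :
    boxCoeff q s = 0 ↔ s ∈ Ideal.span (Set.range fun i => (X i : MvPowerSeries σ R) ^ q) := by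
  rw [mem_span_X_pow_iff, funext_iff]
  exact ⟨fun h d hd => h ⟨d, mem_box.mpr hd⟩, fun h d => h d.1 (mem_box.mp d.2)⟩

lemma boxLift_boxCoeff_sub_mem (s : MvPowerSeries σ R) :
    boxLift q (boxCoeff q s) - s ∈ Ideal.span (Set.range fun i => (X i : MvPowerSeries σ R) ^ q) :=
  by rw [← boxCoeff_eq_zero_iff, map_sub, boxCoeff_boxLift, sub_self]

lemma truncMul_apply (f : MvPowerSeries σ R) (v : box σ q → R) :
    truncMul q f v = boxCoeff q (f * boxLift q v) := rfl

lemma truncMul_boxCoeff (f s : MvPowerSeries σ R) :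
    truncMul q f (boxCoeff q s) = boxCoeff q (f * s) := by
  rw [← sub_eq_zero, truncMul_apply, ← map_sub, ← mul_sub, boxCoeff_eq_zero_iff]
  exact Ideal.mul_mem_left _ f (boxLift_boxCoeff_sub_mem s)

end Truncation

theorem hkDim_eq_finrank_ker_truncMul {σ F : Type} [Fintype σ] [Field F] (f : MvPowerSeries σ F)
    (q : ℕ) : hkDim F σ f q = Module.finrank F (LinearMap.ker (truncMul q f)) := by
  set J := Ideal.span (Set.range fun i => (X i : MvPowerSeries σ F) ^ q)
  set I := Ideal.span ({f} ∪ Set.range fun i => (X i : MvPowerSeries σ F) ^ q)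
  have hJI : J ≤ I := Ideal.span_mono Set.subset_union_right
  let π : (box σ q → F) →ₗ[F] MvPowerSeries σ F ⧸ I :=
    (Ideal.Quotient.mkₐ F I).toLinearMap ∘ₗ boxLift q
  have hπ : ∀ s, π (boxCoeff q s) = Ideal.Quotient.mk I s := fun s =>
    Ideal.Quotient.eq.mpr (hJI (boxLift_boxCoeff_sub_mem s))
  have hsurj : Function.Surjective π := fun y => by
    obtain ⟨s, rfl⟩ := Ideal.Quotient.mk_surjective y
    exact ⟨boxCoeff q s, hπ s⟩
  have hker : LinearMap.ker π = LinearMap.range (truncMul q f) := by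
    ext v
    rw [LinearMap.mem_ker, LinearMap.mem_range]
    change Ideal.Quotient.mk I (boxLift q v) = 0 ↔ _
    rw [Ideal.Quotient.eq_zero_iff_mem]
    simp only [I, Set.singleton_union]
    rw [Ideal.mem_span_insert]
    constructor
    · rintro ⟨a, z, hz, hlift⟩
      refine ⟨boxCoeff q a, ?_⟩
      rw [truncMul_boxCoeff, ← boxCoeff_boxLift v, hlift, map_add,
        boxCoeff_eq_zero_iff.mpr hz, add_zero, mul_comm]
    · rintro ⟨w, rfl⟩
      refine ⟨boxLift q w, boxLift q (truncMul q f w) - f * boxLift q w, ?_, by ring⟩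
      have h := boxLift_boxCoeff_sub_mem (q := q) (f * boxLift q w)
      rwa [← truncMul_boxCoeff, boxCoeff_boxLift] at h
  have e := (LinearMap.quotKerEquivOfSurjective π hsurj).symm
  rw [hker] at e
  have h1 := Submodule.finrank_quotient_add_finrank (LinearMap.range (truncMul q f))
  have h2 := LinearMap.finrank_range_add_finrank_ker (truncMul q f)
  rw [hkDim, e.finrank_eq]
  omega

section Chains

variable {R : Type*} [CommRing R] (q k : ℕ)

def cube : Finset (ℕ × ℕ × ℕ) := range q ×ˢ range q ×ˢ range q

/-- `V` is the coefficient array of a series `s` such that `(X 0 * X 1 + X 2 ^ k) * s` has no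
monomial with exponents in `cube q`. -/
def IsAnnihilated (V : ℕ × ℕ × ℕ → R) : Prop :=
  ∀ a b c, a < q → b < q → c < q →
    (if 0 < a ∧ 0 < b then V (a - 1, b - 1, c) else 0) + (if k ≤ c then V (a, b, c - k) else 0) = 0

/-- The number of steps `(1, 1, -k)` from `p` up to the face `max a b = q - 1`. -/
def chainLevel (p : ℕ × ℕ × ℕ) : ℕ := q - (max p.1 p.2.1 + 1)

def chainTop (p : ℕ × ℕ × ℕ) : ℕ × ℕ × ℕ :=
  (p.1 + chainLevel q p, p.2.1 + chainLevel q p, p.2.2 - chainLevel q p * k)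

/-- The points `e` of the face `max a b = q - 1` whose chain `e - i • (1, 1, -k)`, continued one
step past the wall `a = 0` or `b = 0`, leaves the cube through `c ≥ q`. -/
def freeSet : Finset (ℕ × ℕ × ℕ) :=
  (cube q).filter fun e => max e.1 e.2.1 + 1 = q ∧ q ≤ e.2.2 + (min e.1 e.2.1 + 1) * k

def chainExtend (w : freeSet q k → R) (p : ℕ × ℕ × ℕ) : R :=
  if p ∈ cube q ∧ chainLevel q p * k ≤ p.2.2 then
    (-1) ^ chainLevel q p * (if h : chainTop q k p ∈ freeSet q k then w ⟨_, h⟩ else 0)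
  else 0

variable {q k}

@[simp] lemma mem_cube {a b c : ℕ} : (a, b, c) ∈ cube q ↔ a < q ∧ b < q ∧ c < q := by
  simp [cube]

lemma mem_freeSet {a b c : ℕ} :
    (a, b, c) ∈ freeSet q k ↔ c < q ∧ max a b + 1 = q ∧ q ≤ c + (min a b + 1) * k := by
  simp only [freeSet, mem_filter, mem_cube]
  omega

namespace IsAnnihilated

variable {V : ℕ × ℕ × ℕ → R} (hV : IsAnnihilated q k V) {a b c : ℕ}
include hV

lemma step (ha : a + 1 < q) (hb : b + 1 < q) (hc : c + k < q) :
    V (a, b, c + k) = -V (a + 1, b + 1, c) := by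
  have h := hV (a + 1) (b + 1) (c + k) ha hb hc
  simp only [add_pos_iff, zero_lt_one, or_true, and_self, if_true, Nat.add_sub_cancel,
    Nat.le_add_left] at h
  exact eq_neg_of_add_eq_zero_left h

lemma eq_zero_of_lt (ha : a + 1 < q) (hb : b + 1 < q) (hcq : c < q) (hc : c < k) :
    V (a, b, c) = 0 := by
  simpa [Nat.not_le.mpr hc] using hV (a + 1) (b + 1) c ha hb hcq

lemma eq_zero_of_wall (hab : a = 0 ∨ b = 0) (ha : a < q) (hb : b < q) (hc : c + k < q) :
    V (a, b, c) = 0 := by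
  have h := hV a b (c + k) ha hb hc
  rwa [if_neg (by omega), if_pos (by omega), zero_add, Nat.add_sub_cancel] at h

lemma chain (i : ℕ) (ha : a + i < q) (hb : b + i < q) (hc : c + i * k < q) :
    V (a, b, c + i * k) = (-1) ^ i * V (a + i, b + i, c) := by
  induction i generalizing c with
  | zero => simp
  | succ i ih =>
    have hk : c + (i + 1) * k = c + k + i * k := by ring
    rw [hk, ih (by omega) (by omega) (by omega), hV.step (by omega) (by omega) (by nlinarith)]
    ring_nf

lemma eq_zero_of_not_mem_freeSet (ha : a < q) (hb : b < q) (hmax : max a b + 1 = q)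
    (hfree : c + (min a b + 1) * k < q) : V (a, b, c) = 0 := by
  set m := min a b
  have h := hV.chain (a := a - m) (b := b - m) (c := c) m (by omega) (by omega) (by nlinarith)
  rw [Nat.sub_add_cancel (min_le_left a b), Nat.sub_add_cancel (min_le_right a b),
    hV.eq_zero_of_wall (by omega) (by omega) (by omega) (by nlinarith)] at h
  exact neg_one_pow_mul_eq_zero_iff.mp h.symm

lemma eq_chainExtend (hV0 : ∀ p ∉ cube q, V p = 0) : V = chainExtend q k fun e => V e := by
  funext ⟨a, b, c⟩
  by_cases hp : (a, b, c) ∈ cube q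
  swap
  · rw [hV0 _ hp, chainExtend, if_neg fun h => hp h.1]
  have hp' := mem_cube.mp hp
  obtain ⟨s, hs⟩ : ∃ s, chainLevel q (a, b, c) = s := ⟨_, rfl⟩
  have has : a + s < q ∧ b + s < q ∧ max (a + s) (b + s) + 1 = q := by
    simp only [← hs, chainLevel]; omega
  by_cases hc : s * k ≤ c
  · have hchain := hV.chain (a := a) (b := b) (c := c - s * k) s has.1 has.2.1 (by omega)
    rw [Nat.sub_add_cancel hc] at hchain
    rw [hchain, chainExtend, hs, if_pos ⟨hp, hc⟩]
    simp only [chainTop, hs]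
    split_ifs with ht
    · rfl
    · rw [mem_freeSet] at ht
      rw [hV.eq_zero_of_not_mem_freeSet has.1 has.2.1 has.2.2 (by omega)]
  · -- the chain through `(a, b, c)` reaches `c < k` below the face
    rw [chainExtend, hs, if_neg fun h => hc h.2]
    have hk : 0 < k := Nat.pos_of_ne_zero fun h => hc (by simp [h])
    have hi : c / k < s := (Nat.div_lt_iff_lt_mul hk).mpr (by omega)
    have hchain := hV.chain (a := a) (b := b) (c := c % k) (c / k) (by omega) (by omega)
      (by rw [Nat.mod_add_div']; exact hp'.2.2)
    rw [Nat.mod_add_div'] at hchain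
    rw [hchain, hV.eq_zero_of_lt (by omega) (by omega) ((Nat.mod_le c k).trans_lt hp'.2.2)
      (Nat.mod_lt c hk), mul_zero]

end IsAnnihilated

variable (w : freeSet q k → R) {a b c : ℕ}

lemma chainExtend_of_mem_freeSet (e : freeSet q k) : chainExtend q k w e = w e := by
  obtain ⟨⟨a, b, c⟩, he⟩ := e
  have he' := mem_freeSet.mp he
  have hl : chainLevel q (a, b, c) = 0 := by simp only [chainLevel]; omega
  have ht : chainTop q k (a, b, c) = (a, b, c) := by simp [chainTop, hl]
  simp [chainExtend, hl, ht, he, he'.1]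
  omega

lemma chainExtend_step (ha : a + 1 < q) (hb : b + 1 < q) (hc : c + k < q) :
    chainExtend q k w (a, b, c + k) = -chainExtend q k w (a + 1, b + 1, c) := by
  have hl : chainLevel q (a, b, c + k) = chainLevel q (a + 1, b + 1, c) + 1 := by
    simp only [chainLevel]; omega
  have ht : chainTop q k (a, b, c + k) = chainTop q k (a + 1, b + 1, c) := by
    simp only [chainTop, hl, Prod.mk.injEq]
    refine ⟨by ring, by ring, by rw [add_mul, one_mul]; omega⟩
  simp only [chainExtend, ht, hl, mem_cube, add_mul, one_mul, pow_succ]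
  split_ifs <;> first | ring1 | (exfalso; omega)

lemma chainExtend_eq_zero_of_lt (ha : a + 1 < q) (hb : b + 1 < q) (hc : c < k) :
    chainExtend q k w (a, b, c) = 0 := by
  have hl : 1 ≤ chainLevel q (a, b, c) := by simp only [chainLevel]; omega
  rw [chainExtend, if_neg]
  rintro ⟨-, h⟩
  exact absurd h (by dsimp only; nlinarith)

lemma chainExtend_eq_zero_of_wall (hab : a = 0 ∨ b = 0) (hc : c + k < q) :
    chainExtend q k w (a, b, c) = 0 := by
  rw [chainExtend]
  split_ifs with h1 h2
  · simp only [chainTop, mem_freeSet] at h1 h2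
    have hmin : min (a + chainLevel q (a, b, c)) (b + chainLevel q (a, b, c)) =
        chainLevel q (a, b, c) := by
      simp only [chainLevel]; omega
    rw [hmin, add_mul, one_mul] at h2
    omega
  · rw [mul_zero]
  · rfl

lemma isAnnihilated_chainExtend : IsAnnihilated q k (chainExtend q k w) := by
  intro a b c ha hb hc
  split_ifs with hab hkc hkc
  · obtain ⟨a, rfl⟩ : ∃ a', a = a' + 1 := ⟨a - 1, by omega⟩
    obtain ⟨b, rfl⟩ : ∃ b', b = b' + 1 := ⟨b - 1, by omega⟩
    obtain ⟨c, rfl⟩ : ∃ c', c = c' + k := ⟨c - k, by omega⟩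
    simp only [Nat.add_sub_cancel]
    rw [chainExtend_step w ha hb hc, neg_add_cancel]
  · rw [add_zero, chainExtend_eq_zero_of_lt w (by omega) (by omega) (by omega)]
  · rw [zero_add, chainExtend_eq_zero_of_wall w (by omega) (by omega)]
  · rw [add_zero]

end Chains

section Coefficients

variable {R : Type*} [CommRing R] {q k : ℕ}

noncomputable def tripleExp (p : ℕ × ℕ × ℕ) : Fin 3 →₀ ℕ :=
  Finsupp.equivFunOnFinite.symm ![p.1, p.2.1, p.2.2]

def ofTriples (V : ℕ × ℕ × ℕ → R) : MvPowerSeries (Fin 3) R := fun d => V (d 0, d 1, d 2)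

@[simp] lemma tripleExp_zero (p : ℕ × ℕ × ℕ) : tripleExp p 0 = p.1 := by simp [tripleExp]
@[simp] lemma tripleExp_one (p : ℕ × ℕ × ℕ) : tripleExp p 1 = p.2.1 := by simp [tripleExp]
@[simp] lemma tripleExp_two (p : ℕ × ℕ × ℕ) : tripleExp p 2 = p.2.2 := by simp [tripleExp]

lemma finsupp_fin_three_ext {d e : Fin 3 →₀ ℕ} (h0 : d 0 = e 0) (h1 : d 1 = e 1)
    (h2 : d 2 = e 2) : d = e := by
  ext i; fin_cases i <;> assumption

lemma tripleExp_eta (d : Fin 3 →₀ ℕ) : tripleExp (d 0, d 1, d 2) = d :=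
  finsupp_fin_three_ext (by simp) (by simp) (by simp)

lemma tripleExp_sub (p p' : ℕ × ℕ × ℕ) :
    tripleExp p - tripleExp p' = tripleExp (p.1 - p'.1, p.2.1 - p'.2.1, p.2.2 - p'.2.2) :=
  finsupp_fin_three_ext (by simp) (by simp) (by simp)

lemma tripleExp_le_tripleExp {p p' : ℕ × ℕ × ℕ} :
    tripleExp p ≤ tripleExp p' ↔ p.1 ≤ p'.1 ∧ p.2.1 ≤ p'.2.1 ∧ p.2.2 ≤ p'.2.2 := by
  simp [Finsupp.le_def, Fin.forall_fin_succ]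

lemma tripleExp_mem_box {p : ℕ × ℕ × ℕ} : tripleExp p ∈ box (Fin 3) q ↔ p ∈ cube q := by
  simp [cube, Fin.forall_fin_succ]

@[simp] lemma coeff_tripleExp_ofTriples (V : ℕ × ℕ × ℕ → R) (p : ℕ × ℕ × ℕ) :
    coeff (tripleExp p) (ofTriples V) = V p := by
  simp [ofTriples, coeff_apply]

lemma coeff_tripleExp_X_mul_X_add_X_pow_mul (s : MvPowerSeries (Fin 3) R) (a b c : ℕ) :
    coeff (tripleExp (a, b, c)) ((X 0 * X 1 + X 2 ^ k) * s) =
      (if 0 < a ∧ 0 < b then coeff (tripleExp (a - 1, b - 1, c)) s else 0) +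
        (if k ≤ c then coeff (tripleExp (a, b, c - k)) s else 0) := by
  have hX : (X 0 * X 1 : MvPowerSeries (Fin 3) R) = monomial (tripleExp (1, 1, 0)) 1 := by
    rw [← pow_one (X 0), ← pow_one (X 1), X_pow_eq, X_pow_eq, monomial_mul_monomial, one_mul,
      show Finsupp.single 0 1 + Finsupp.single 1 1 = tripleExp (1, 1, 0) from
        finsupp_fin_three_ext (by simp) (by simp) (by simp)]
  have hXk : (X 2 ^ k : MvPowerSeries (Fin 3) R) = monomial (tripleExp (0, 0, k)) 1 := by
    rw [X_pow_eq, show Finsupp.single 2 k = tripleExp (0, 0, k) from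
      finsupp_fin_three_ext (by simp) (by simp) (by simp)]
  rw [add_mul, map_add, hX, hXk, coeff_monomial_mul, coeff_monomial_mul]
  simp only [tripleExp_le_tripleExp, tripleExp_sub, one_mul, Nat.sub_zero, zero_le, true_and,
    and_true]
  rfl

lemma boxCoeff_X_mul_X_add_X_pow_mul_eq_zero_iff (s : MvPowerSeries (Fin 3) R) :
    boxCoeff q ((X 0 * X 1 + X 2 ^ k) * s) = 0 ↔
      IsAnnihilated q k fun p => coeff (tripleExp p) s := by
  simp only [funext_iff, boxCoeff_apply, Pi.zero_apply, Subtype.forall, mem_box, IsAnnihilated,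
    ← coeff_tripleExp_X_mul_X_add_X_pow_mul]
  constructor
  · intro h a b c ha hb hc
    exact h _ (by simp [Fin.forall_fin_succ, ha, hb, hc])
  · intro h d hd
    rw [← tripleExp_eta d]
    exact h _ _ _ (hd 0) (hd 1) (hd 2)

variable (q k) in
noncomputable def kerTruncMulEquiv :
    LinearMap.ker (truncMul q (X 0 * X 1 + X 2 ^ k : MvPowerSeries (Fin 3) R)) ≃ₗ[R]
      (freeSet q k → R) where
  toFun v e := coeff (tripleExp e) (boxLift q v.1)
  map_add' u v := by ext; simp
  map_smul' a v := by ext; simp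
  invFun w := ⟨boxCoeff q (ofTriples (chainExtend q k w)), by
    rw [LinearMap.mem_ker, truncMul_boxCoeff, boxCoeff_X_mul_X_add_X_pow_mul_eq_zero_iff]
    simpa using isAnnihilated_chainExtend w⟩
  left_inv v := by
    have hv := v.2
    rw [LinearMap.mem_ker, truncMul_apply, boxCoeff_X_mul_X_add_X_pow_mul_eq_zero_iff] at hv
    have hv0 (p : ℕ × ℕ × ℕ) (hp : p ∉ cube q) : coeff (tripleExp p) (boxLift q v.1) = 0 := by
      rw [coeff_boxLift, dif_neg (tripleExp_mem_box.not.mpr hp)]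
    ext d
    change chainExtend q k (fun e => coeff (tripleExp e) (boxLift q v.1)) (d.1 0, d.1 1, d.1 2) =
      v.1 d
    rw [← hv.eq_chainExtend hv0]
    dsimp only
    rw [tripleExp_eta, coeff_boxLift, dif_pos d.2]
  right_inv w := by
    ext e
    have he : tripleExp e.1 ∈ box (Fin 3) q := tripleExp_mem_box.mpr (mem_of_mem_filter _ e.2)
    simp only [coeff_boxLift, dif_pos he]
    exact chainExtend_of_mem_freeSet w e

theorem finrank_ker_truncMul_X_mul_X_add_X_pow {F : Type*} [Field F] :
    Module.finrank F (LinearMap.ker (truncMul q (X 0 * X 1 + X 2 ^ k : MvPowerSeries (Fin 3) F))) =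
      (freeSet q k).card := by
  rw [(kerTruncMulEquiv q k).finrank_eq, Module.finrank_fintype_fun_eq_card, Fintype.card_coe]

end Coefficients

section Counting

variable {q k : ℕ}

variable (q k) in
def exitPairs : Finset (ℕ × ℕ) :=
  (range q ×ˢ range q).filter fun bc => q ≤ bc.2 + (bc.1 + 1) * k

@[simp] lemma mem_exitPairs {b c : ℕ} :
    (b, c) ∈ exitPairs q k ↔ b < q ∧ c < q ∧ q ≤ c + (b + 1) * k := by
  simp [exitPairs, and_assoc]

lemma card_filter_fst_freeSet :
    ((freeSet q k).filter fun e => e.1 + 1 = q).card = (exitPairs q k).card := by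
  have hmem {a b c : ℕ} (ha : a + 1 = q) : (a, b, c) ∈ freeSet q k ↔ (b, c) ∈ exitPairs q k := by
    rw [mem_freeSet, mem_exitPairs]
    by_cases hb : b < q
    · rw [min_eq_right (by omega : b ≤ a)]
      omega
    · omega
  refine card_nbij' (fun e => (e.2.1, e.2.2)) (fun bc => (q - 1, bc.1, bc.2)) ?_ ?_ ?_ ?_
  · rintro ⟨a, b, c⟩ he
    simp only [mem_coe, mem_filter] at he
    exact (hmem he.2).mp he.1
  · rintro ⟨b, c⟩ hbc
    have hq : q - 1 + 1 = q := by have := (mem_exitPairs.mp hbc).1; omega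
    simp only [mem_coe, mem_filter]
    exact ⟨(hmem hq).mpr hbc, hq⟩
  · rintro ⟨a, b, c⟩ he
    simp only [mem_coe, mem_filter] at he
    simp only [Prod.mk.injEq, and_true]
    omega
  · exact fun _ _ => rfl

lemma card_filter_snd_freeSet :
    ((freeSet q k).filter fun e => e.2.1 + 1 = q).card = (exitPairs q k).card := by
  rw [← card_filter_fst_freeSet]
  have hswap {a b c : ℕ} : (a, b, c) ∈ freeSet q k → (b, a, c) ∈ freeSet q k := by
    rw [mem_freeSet, mem_freeSet, max_comm, min_comm]
    exact id
  refine card_nbij' (fun e => (e.2.1, e.1, e.2.2)) (fun e => (e.2.1, e.1, e.2.2)) ?_ ?_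
    (fun _ _ => rfl) (fun _ _ => rfl) <;>
  · rintro ⟨a, b, c⟩ he
    simp only [mem_coe, mem_filter] at he ⊢
    exact ⟨hswap he.1, he.2⟩

lemma card_filter_fst_snd_freeSet (hk : 0 < k) :
    ((freeSet q k).filter fun e => e.1 + 1 = q ∧ e.2.1 + 1 = q).card = q := by
  conv_rhs => rw [← card_range q]
  refine card_nbij' (fun e => e.2.2) (fun c => (q - 1, q - 1, c)) ?_ ?_ ?_ ?_
  · rintro ⟨a, b, c⟩ he
    simp only [mem_coe, mem_filter] at he
    simpa using (mem_freeSet.mp he.1).1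
  · intro c hc
    have hc : c < q := by simpa using hc
    have hq : q ≤ c + (q - 1 + 1) * k := by
      rw [show q - 1 + 1 = q by omega]; nlinarith
    simp only [mem_coe, mem_filter, mem_freeSet, max_self, min_self]
    omega
  · rintro ⟨a, b, c⟩ he
    simp only [mem_coe, mem_filter] at he
    simp only [Prod.mk.injEq, and_true]
    omega
  · exact fun _ _ => rfl

lemma card_freeSet_add_eq_two_mul (hk : 0 < k) :
    (freeSet q k).card + q = 2 * (exitPairs q k).card := by
  have hunion : freeSet q k =
      (freeSet q k).filter (fun e => e.1 + 1 = q) ∪ (freeSet q k).filter fun e => e.2.1 + 1 = q := by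
    rw [← filter_or, filter_true_of_mem]
    rintro ⟨a, b, c⟩ he
    have := (mem_freeSet.mp he).2.1
    show a + 1 = q ∨ b + 1 = q
    omega
  have h := card_union_add_card_inter ((freeSet q k).filter fun e => e.1 + 1 = q)
    ((freeSet q k).filter fun e => e.2.1 + 1 = q)
  rw [← hunion, ← filter_and, card_filter_fst_freeSet, card_filter_snd_freeSet,
    card_filter_fst_snd_freeSet hk] at h
  omega

lemma card_exitPairs_add_sum_range_div (hk : 0 < k) :
    (exitPairs q k).card + ∑ t ∈ range q, t / k = q ^ 2 := by
  have hblocked : ((range q ×ˢ range q).filter fun bc : ℕ × ℕ => ¬ q ≤ bc.2 + (bc.1 + 1) * k).card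
      = ∑ t ∈ range q, t / k := by
    rw [card_filter, sum_product_right, ← sum_range_reflect (fun t => t / k) q]
    refine sum_congr rfl fun c hc => ?_
    rw [← card_filter, ← card_range ((q - 1 - c) / k)]
    congr 1
    ext b
    simp only [mem_filter, mem_range] at hc ⊢
    have hdiv := Nat.le_div_iff_mul_le hk (x := b + 1) (y := q - 1 - c)
    have hle := Nat.div_le_self (q - 1 - c) k
    rw [add_mul, one_mul] at hdiv ⊢
    omega
  rw [exitPairs, ← hblocked, card_filter_add_card_filter_not, card_product, card_range, sq]

lemma two_mul_sum_range_div_add (hk : 0 < k) (q : ℕ) :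
    2 * k * ∑ t ∈ range q, t / k + k * q + (q % k) ^ 2 = q ^ 2 + k * (q % k) := by
  induction q with
  | zero => simp
  | succ q ih =>
    have hq := Nat.div_add_mod q k
    rcases Nat.lt_or_ge (q % k + 1) k with h | h
    · have h' : (q + 1) % k = q % k + 1 := by
        rw [Nat.add_mod, Nat.one_mod_eq_one.mpr (by omega), Nat.mod_eq_of_lt h]
      rw [sum_range_succ, h']
      linear_combination ih + 2 * hq
    · have hkr : k = q % k + 1 := by have := Nat.mod_lt q hk; omega
      have h' : (q + 1) % k = 0 := by
        rw [show q + 1 = k * (q / k + 1) by rw [mul_add, mul_one]; omega, Nat.mul_mod_right]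
      rw [sum_range_succ, h']
      linear_combination ih + 2 * hq + (1 + q % k) * hkr

end Counting

theorem hkDim_X_mul_X_add_X_pow {F : Type} [Field F] {k : ℕ} (hk : 0 < k) (q : ℕ) :
    (k : ℤ) * hkDim F (Fin 3) (X 0 * X 1 + X 2 ^ k) q =
      (2 * k - 1) * q ^ 2 - (q % k : ℕ) * (k - (q % k : ℕ)) := by
  rw [hkDim_eq_finrank_ker_truncMul, finrank_ker_truncMul_X_mul_X_add_X_pow]
  have h1 := card_freeSet_add_eq_two_mul (q := q) hk
  have h2 := card_exitPairs_add_sum_range_div (q := q) hk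
  have h3 := two_mul_sum_range_div_add hk q
  zify at h1 h2 h3
  push_cast
  linear_combination (k : ℤ) * h1 + 2 * (k : ℤ) * h2 - h3

lemma two_pow_mod_three (n : ℕ) : 2 ^ n % 3 = 1 ∨ 2 ^ n % 3 = 2 := by
  induction n with
  | zero => simp
  | succ n ih => rw [pow_succ]; omega

lemma two_pow_mod_five (n : ℕ) :
    if Even n then 2 ^ n % 5 = 1 ∨ 2 ^ n % 5 = 4 else 2 ^ n % 5 = 2 ∨ 2 ^ n % 5 = 3 := by
  induction n with
  | zero => simp
  | succ n ih =>
    simp only [pow_succ, Nat.even_add_one]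
    split_ifs at ih ⊢ <;> omega

lemma cast_two_pow_sq (n : ℕ) : ((2 ^ n : ℕ) : ℤ) ^ 2 = 4 ^ n := by
  push_cast
  rw [← pow_mul, mul_comm, pow_mul]
  norm_num

lemma hkDim_X_mul_X_add_X_pow_three_two_pow {F : Type} [Field F] (n : ℕ) :
    3 * (hkDim F (Fin 3) (X 0 * X 1 + X 2 ^ 3) (2 ^ n) : ℤ) = 5 * 4 ^ n - 2 := by
  have h := hkDim_X_mul_X_add_X_pow (F := F) (k := 3) (by norm_num) (2 ^ n)
  simp only [Nat.cast_ofNat] at h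
  rw [h, cast_two_pow_sq]
  rcases two_pow_mod_three n with hr | hr <;> rw [hr] <;> norm_num

lemma hkDim_X_mul_X_add_X_pow_five_two_pow {F : Type} [Field F] (n : ℕ) :
    5 * (hkDim F (Fin 3) (X 0 * X 1 + X 2 ^ 5) (2 ^ n) : ℤ) =
      9 * 4 ^ n - if Even n then 4 else 6 := by
  have h := hkDim_X_mul_X_add_X_pow (F := F) (k := 5) (by norm_num) (2 ^ n)
  simp only [Nat.cast_ofNat] at h
  rw [h, cast_two_pow_sq]
  have hr := two_pow_mod_five n
  split_ifs at hr ⊢ <;> rcases hr with hr | hr <;> rw [hr] <;> norm_num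

end HilbertKunz

theorem stmt6_general (F : Type) [Field F] :
    (∀ n : ℕ, 1 ≤ n →
      2 * ((hkDim F (Fin 3)
            (MvPowerSeries.X 0 * MvPowerSeries.X 1 + MvPowerSeries.X 2 ^ 3) (2 ^ n) : ℤ)
          - 4 * hkDim F (Fin 3)
            (MvPowerSeries.X 0 * MvPowerSeries.X 1 + MvPowerSeries.X 2 ^ 3) (2 ^ (n - 1)))
        - ((hkDim F (Fin 3)
            (MvPowerSeries.X 0 * MvPowerSeries.X 1 + MvPowerSeries.X 2 ^ 5) (2 ^ n) : ℤ)
          - 4 * hkDim F (Fin 3)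
            (MvPowerSeries.X 0 * MvPowerSeries.X 1 + MvPowerSeries.X 2 ^ 5) (2 ^ (n - 1)))
        = if Odd n then 2 else 0) ∧
    2 * (hkDim F (Fin 3)
          (MvPowerSeries.X 0 * MvPowerSeries.X 1 + MvPowerSeries.X 2 ^ 3) (2 ^ 0) : ℤ)
      - (hkDim F (Fin 3)
          (MvPowerSeries.X 0 * MvPowerSeries.X 1 + MvPowerSeries.X 2 ^ 5) (2 ^ 0) : ℤ)
      = 1 := by
  refine ⟨fun n hn => ?_, ?_⟩
  · obtain ⟨m, rfl⟩ : ∃ m, n = m + 1 := ⟨n - 1, by omega⟩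
    have h3 := HilbertKunz.hkDim_X_mul_X_add_X_pow_three_two_pow (F := F) (m + 1)
    have h3' := HilbertKunz.hkDim_X_mul_X_add_X_pow_three_two_pow (F := F) m
    have h5 := HilbertKunz.hkDim_X_mul_X_add_X_pow_five_two_pow (F := F) (m + 1)
    have h5' := HilbertKunz.hkDim_X_mul_X_add_X_pow_five_two_pow (F := F) m
    rw [pow_succ 4] at h3 h5
    simp only [Nat.even_add_one] at h5
    simp only [Nat.add_sub_cancel, Nat.odd_add_one, Nat.not_odd_iff_even]
    split_ifs at h5 h5' ⊢ <;> omega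
  · have h3 := HilbertKunz.hkDim_X_mul_X_add_X_pow_three_two_pow (F := F) 0
    have h5 := HilbertKunz.hkDim_X_mul_X_add_X_pow_five_two_pow (F := F) 0
    norm_num at h3 h5 ⊢
    omega

/-- Lemma 1.9(b) of the paper, coefficientwise: for `char F = 2` and
`e_n(uv + x^k) = dim_F F[[u,v,x]]/(uv + x^k, u^q, v^q, x^q)` with `q = 2^n`, one has,
for every `n ≥ 1`,
`2(e_n(uv+x³) - 4e_(n-1)(uv+x³)) - (e_n(uv+x⁵) - 4e_(n-1)(uv+x⁵)) = 2` if `n` is odd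
and `= 0` if `n` is even; moreover `2·e_0(uv+x³) - e_0(uv+x⁵) = 1`. -/
theorem stmt6 (F : Type) [Field F] [CharP F 2] :
    (∀ n : ℕ, 1 ≤ n →
      2 * ((hkDim F (Fin 3)
            (MvPowerSeries.X 0 * MvPowerSeries.X 1 + MvPowerSeries.X 2 ^ 3) (2 ^ n) : ℤ)
          - 4 * hkDim F (Fin 3)
            (MvPowerSeries.X 0 * MvPowerSeries.X 1 + MvPowerSeries.X 2 ^ 3) (2 ^ (n - 1)))
        - ((hkDim F (Fin 3)
            (MvPowerSeries.X 0 * MvPowerSeries.X 1 + MvPowerSeries.X 2 ^ 5) (2 ^ n) : ℤ)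
          - 4 * hkDim F (Fin 3)
            (MvPowerSeries.X 0 * MvPowerSeries.X 1 + MvPowerSeries.X 2 ^ 5) (2 ^ (n - 1)))
        = if Odd n then 2 else 0) ∧
    2 * (hkDim F (Fin 3)
          (MvPowerSeries.X 0 * MvPowerSeries.X 1 + MvPowerSeries.X 2 ^ 3) (2 ^ 0) : ℤ)
      - (hkDim F (Fin 3)
          (MvPowerSeries.X 0 * MvPowerSeries.X 1 + MvPowerSeries.X 2 ^ 5) (2 ^ 0) : ℤ)
      = 1 :=
  stmt6_general F
end
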